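/- arXiv:1806.03428 — 3 statements merged into one kernel-verified Lean document; each statement's English description precedes it below -/
import Mathlib

section
/- Assume μ is Ahlfors d_H-regular and the heat kernel satisfies the upper sub-Gaussian estimate. Let u ∈ L¹(X,μ) and for s ∈ ℝ let E_s(u) = { x ∈ X : u(x) > s }. Let 0 < α ≤ d_H/d_W and R > 0, and set h(u,s) = sup_{r∈(0,R]} r^{−α d_W} μ({ x ∈ E_s(u) : d(x, X ∖ E_s(u)) < r }). If s ↦ h(u,s) belongs to L¹(ℝ, ds), then u ∈ B^{1,α}(X) and there exist constants C₁, C₂ > 0, independent of u and R (depending only on α and the structural constants), such that ‖u‖_{1,α} ≤ C₁ R^{−α d_W} ‖u‖_{L¹(X,μ)} + C₂ ∫_ℝ h(u,s) ds. -/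
open MeasureTheory ENNReal Metric Filter

noncomputable section

namespace BesovDirichlet

variable {X : Type*} [MeasurableSpace X]

/-- A heat kernel on a measure space: jointly measurable, nonnegative, symmetric,
satisfying the semigroup property and conservative. -/
structure IsHeatKernel (μ : Measure X) (K : ℝ → X → X → ℝ) : Prop where
  measurable : ∀ t : ℝ, Measurable fun xy : X × X => K t xy.1 xy.2
  nonneg : ∀ (t : ℝ) (x y : X), 0 ≤ K t x y
  symm : ∀ (t : ℝ) (x y : X), K t x y = K t y x
  semigroup : ∀ s t : ℝ, 0 < s → 0 < t →
    ∀ᵐ xy ∂(μ.prod μ), (∫ z, K t xy.1 z * K s z xy.2 ∂μ) = K (t + s) xy.1 xy.2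
  conservative : ∀ t : ℝ, 0 < t → ∀ᵐ x ∂μ, (∫ y, K t x y ∂μ) = 1

/-- The heat semigroup `P_t f (x) = ∫ p_t(x,y) f(y) dμ(y)`. -/
def heatOp (μ : Measure X) (K : ℝ → X → X → ℝ) (t : ℝ) (f : X → ℝ) (x : X) : ℝ :=
  ∫ y, K t x y * f y ∂μ

/-- The double integral `∫∫ |f(x) − f(y)|^p p_t(x,y) dμ(x) dμ(y)` as an extended real. -/
def besovEnergy (μ : Measure X) (K : ℝ → X → X → ℝ) (p t : ℝ) (f : X → ℝ) : ℝ≥0∞ :=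
  ∫⁻ x, (∫⁻ y, ENNReal.ofReal (|f x - f y| ^ p) * ENNReal.ofReal (K t x y) ∂μ) ∂μ

/-- The heat-semigroup Besov seminorm `‖f‖_{p,α}`. -/
def besovSeminorm (μ : Measure X) (K : ℝ → X → X → ℝ) (p α : ℝ) (f : X → ℝ) : ℝ≥0∞ :=
  ⨆ (t : ℝ) (_ : 0 < t), ENNReal.ofReal (t ^ (-α)) * besovEnergy μ K p t f ^ (1 / p)

/-- Membership in the Besov space `B^{p,α}(X)`. -/
def MemBesov (μ : Measure X) (K : ℝ → X → X → ℝ) (p α : ℝ) (f : X → ℝ) : Prop :=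
  MemLp f (ENNReal.ofReal p) μ ∧ besovSeminorm μ K p α f ≠ ∞

/-- Ahlfors `d_H`-regularity of the measure `μ`. -/
def AhlforsRegular [PseudoMetricSpace X] (μ : Measure X) (c₁ c₂ dH : ℝ) : Prop :=
  ∀ (x : X) (r : ℝ), 0 < r →
    ENNReal.ofReal (c₁ * r ^ dH) ≤ μ (Metric.ball x r) ∧
      μ (Metric.ball x r) ≤ ENNReal.ofReal (c₂ * r ^ dH)

/-- Upper sub-Gaussian heat kernel estimate with parameters `d_H, d_W` and constants `c₃, c₄`. -/
def SubGaussianUpperBound [PseudoMetricSpace X] (μ : Measure X) (K : ℝ → X → X → ℝ)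
    (c₃ c₄ dH dW : ℝ) : Prop :=
  ∀ t : ℝ, 0 < t → ∀ᵐ xy ∂(μ.prod μ),
    K t xy.1 xy.2 ≤ c₃ * t ^ (-(dH / dW)) *
      Real.exp (-c₄ * (dist xy.1 xy.2 ^ dW / t) ^ (1 / (dW - 1)))

/-- Lower sub-Gaussian heat kernel estimate with parameters `d_H, d_W` and constants `c₅, c₆`. -/
def SubGaussianLowerBound [PseudoMetricSpace X] (μ : Measure X) (K : ℝ → X → X → ℝ)
    (c₅ c₆ dH dW : ℝ) : Prop :=
  ∀ t : ℝ, 0 < t → ∀ᵐ xy ∂(μ.prod μ),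
    c₅ * t ^ (-(dH / dW)) *
        Real.exp (-c₆ * (dist xy.1 xy.2 ^ dW / t) ^ (1 / (dW - 1))) ≤ K t xy.1 xy.2

/-- The metric Besov quantity `N_p^β(f,r) = r^{−(β+d_H/p)} (∬_{d(x,y)<r} |f(x)−f(y)|^p)^{1/p}`. -/
def metricBesovN [PseudoMetricSpace X] (μ : Measure X) (dH p β : ℝ) (f : X → ℝ) (r : ℝ) :
    ℝ≥0∞ :=
  ENNReal.ofReal (r ^ (-(β + dH / p))) *
    (∫⁻ x, (∫⁻ y in Metric.ball x r, ENNReal.ofReal (|f x - f y| ^ p) ∂μ) ∂μ) ^ (1 / p)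

/-
Layer-cake in the level `s`: `|u x - u y| = ∫ (1[u y ≤ s < u x] + 1[u x ≤ s < u y]) ds`, and when
`d(x, y) < ρ` the first indicator forces `x` into the layer `{x ∈ E_s(u) : d(x, X ∖ E_s(u)) < ρ}`.
Integrating against `μ(B(x, ρ)) ≤ c₂ ρ^{d_H}` gives, for `ρ ≤ R`,
`∬_{d(x,y)<ρ} |u x - u y| ≤ 2 c₂ ρ^{d_H + α d_W} ∫ h(u,s) ds`, while for `ρ > R` the crude bound
`2 c₂ ρ^{d_H} ‖u‖₁ ≤ 2 c₂ ρ^{d_H + α d_W} R^{-α d_W} ‖u‖₁` suffices. The sub-Gaussian estimate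
dominates `p_t` by `c₃ t^{-d_H/d_W} ∑ₖ e^{-c₄ k} 1[d(x,y) < (k+1) t^{1/d_W}]`; on each shell the
truncated bound produces `((k+1) t^{1/d_W})^{d_H + α d_W}`, whose power of `t` cancels
`t^{-α} t^{-d_H/d_W}` exactly, so `t^{-α} ∬ |u x - u y| p_t(x,y)` is bounded uniformly in `t`.
-/

section Separability

variable {X : Type*} [PseudoMetricSpace X]

theorem exists_pairwise_le_dist_forall_exists_dist_lt {ε : ℝ} (hε : 0 < ε) :
    ∃ T : Set X, T.Pairwise (fun a b => ε ≤ dist a b) ∧ ∀ x, ∃ y ∈ T, dist x y < ε := by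
  obtain ⟨T, hT⟩ := zorn_subset {T : Set X | T.Pairwise fun a b => ε ≤ dist a b}
    fun c hcS hc => ⟨⋃₀ c, hc.pairwise_sUnion.2 hcS, fun _ => Set.subset_sUnion_of_mem⟩
  refine ⟨T, hT.prop, fun x => ?_⟩
  by_contra! hfar
  have hxT : x ∉ T := fun hx => (hfar x hx).not_gt (by simpa using hε)
  have hins : (insert x T).Pairwise fun a b => ε ≤ dist a b :=
    hT.prop.insert fun b hb _ => ⟨hfar b hb, dist_comm x b ▸ hfar b hb⟩
  exact hxT (hT.mem_of_prop_insert hins)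

variable [MeasurableSpace X] [OpensMeasurableSpace X]

theorem countable_of_pairwise_two_mul_le_dist (μ : Measure X) [SFinite μ] {δ : ℝ}
    (hpos : ∀ x, 0 < μ (ball x δ)) {T : Set X}
    (hT : T.Pairwise fun a b => 2 * δ ≤ dist a b) : T.Countable := by
  have hdisj : Pairwise fun a b : T => Disjoint (ball (a : X) δ) (ball b δ) := fun a b hab =>
    ball_disjoint_ball (by simpa [two_mul] using hT a.2 b.2 (Subtype.coe_ne_coe.2 hab))
  have h := Measure.countable_meas_pos_of_disjoint_iUnion (μ := μ)
    (fun y : T => measurableSet_ball) hdisj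
  simp only [hpos, Set.ofPred_true] at h
  exact Set.countable_coe_iff.1 (Set.countable_univ_iff.1 h)

theorem secondCountableTopology_of_measure_ball_pos (μ : Measure X) [SFinite μ]
    (hpos : ∀ x r, 0 < r → 0 < μ (ball x r)) : SecondCountableTopology X := by
  refine Metric.secondCountable_of_almost_dense_set fun ε hε => ?_
  obtain ⟨T, hsep, hdense⟩ := exists_pairwise_le_dist_forall_exists_dist_lt (X := X) hε
  refine ⟨T, countable_of_pairwise_two_mul_le_dist μ (δ := ε / 2)
    (fun x => hpos x _ (half_pos hε)) ?_, fun x => ?_⟩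
  · simpa [mul_div_cancel₀] using hsep
  · obtain ⟨y, hy, hxy⟩ := hdense x
    exact ⟨y, hy, hxy.le⟩

end Separability

section Layers

variable {X : Type*} [PseudoMetricSpace X]

def nearDiagonal (ρ : ℝ) : Set (X × X) := {z | dist z.1 z.2 < ρ}

@[simp]
theorem mem_nearDiagonal {ρ : ℝ} {z : X × X} : z ∈ nearDiagonal ρ ↔ dist z.1 z.2 < ρ := Iff.rfl

def boundaryLayer (u : X → ℝ) (s r : ℝ) : Set X := {x | s < u x ∧ infDist x {y | s < u y}ᶜ < r}

theorem mem_boundaryLayer_of_dist_lt {u : X → ℝ} {s r : ℝ} {x y : X} (hx : s < u x)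
    (hy : u y ≤ s) (hxy : dist x y < r) : x ∈ boundaryLayer u s r :=
  ⟨hx, (infDist_le_dist_of_mem (by simpa using hy)).trans_lt hxy⟩

/-- The function `s ↦ h(u, s)` of the paper, with `a = α d_W`. -/
def boundaryLayerProfile [MeasurableSpace X] (μ : Measure X) (u : X → ℝ) (a R s : ℝ) : ℝ≥0∞ :=
  ⨆ (r : ℝ) (_ : 0 < r) (_ : r ≤ R), ENNReal.ofReal (r ^ (-a)) * μ (boundaryLayer u s r)

theorem measure_boundaryLayer_le_mul_boundaryLayerProfile [MeasurableSpace X] (μ : Measure X)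
    (u : X → ℝ) {a R ρ : ℝ} (hρ : 0 < ρ) (hρR : ρ ≤ R) (s : ℝ) :
    μ (boundaryLayer u s ρ) ≤ ENNReal.ofReal (ρ ^ a) * boundaryLayerProfile μ u a R s := by
  calc μ (boundaryLayer u s ρ)
      = ENNReal.ofReal (ρ ^ a) * (ENNReal.ofReal (ρ ^ (-a)) * μ (boundaryLayer u s ρ)) := by
        rw [← mul_assoc, ← ENNReal.ofReal_mul (by positivity), ← Real.rpow_add hρ, add_neg_cancel,
          Real.rpow_zero, ENNReal.ofReal_one, one_mul]
    _ ≤ ENNReal.ofReal (ρ ^ a) * boundaryLayerProfile μ u a R s := by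
        gcongr
        exact le_iSup₂_of_le ρ hρ (le_iSup_of_le hρR le_rfl)

end Layers

theorem enorm_sub_eq_volume_Ico_add_volume_Ico (a b : ℝ) :
    ‖a - b‖ₑ = volume (Set.Ico b a) + volume (Set.Ico a b) := by
  rw [Real.volume_Ico, Real.volume_Ico, Real.enorm_eq_ofReal_abs]
  rcases le_total a b with h | h
  · rw [abs_of_nonpos (sub_nonpos.2 h), ENNReal.ofReal_of_nonpos (sub_nonpos.2 h), zero_add,
      neg_sub]
  · rw [abs_of_nonneg (sub_nonneg.2 h), ENNReal.ofReal_of_nonpos (sub_nonpos.2 h), add_zero]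

section NearDiagonal

variable {X : Type*} [PseudoMetricSpace X] [MeasurableSpace X] [OpensMeasurableSpace X]
  [SecondCountableTopology X] {μ : Measure X} [SFinite μ]

theorem measurableSet_nearDiagonal (ρ : ℝ) : MeasurableSet (nearDiagonal (X := X) ρ) :=
  measurableSet_lt measurable_dist measurable_const

theorem setLIntegral_nearDiagonal_swap (F : X × X → ℝ≥0∞) (ρ : ℝ) :
    ∫⁻ z in nearDiagonal ρ, F z.swap ∂μ.prod μ = ∫⁻ z in nearDiagonal ρ, F z ∂μ.prod μ := by
  rw [← lintegral_indicator (measurableSet_nearDiagonal ρ),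
    ← lintegral_indicator (measurableSet_nearDiagonal ρ), ← lintegral_prod_swap]
  congr with z
  simp only [Set.indicator, mem_nearDiagonal, Prod.fst_swap, Prod.snd_swap, Prod.swap_swap,
    dist_comm]

theorem setLIntegral_nearDiagonal_fst_le {f : X → ℝ≥0∞} (hf : AEMeasurable f μ) {ρ : ℝ}
    {V : ℝ≥0∞} (hV : ∀ x, μ (ball x ρ) ≤ V) :
    ∫⁻ z in nearDiagonal ρ, f z.1 ∂μ.prod μ ≤ V * ∫⁻ x, f x ∂μ := by
  rw [← lintegral_indicator (measurableSet_nearDiagonal ρ),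
    lintegral_prod _ (hf.comp_fst.indicator (measurableSet_nearDiagonal ρ)),
    ← lintegral_const_mul'' V hf]
  refine lintegral_mono fun x => ?_
  have hslice : ∀ y, (nearDiagonal ρ).indicator (fun z => f z.1) (x, y) =
      (ball x ρ).indicator (fun _ => f x) y := fun y => by
    simp only [Set.indicator, mem_nearDiagonal, mem_ball, dist_comm]
  simp_rw [hslice, lintegral_indicator_const measurableSet_ball, mul_comm (f x)]
  gcongr
  exact hV x

theorem setLIntegral_nearDiagonal_enorm_sub_le {u : X → ℝ} (hu : AEMeasurable u μ) {ρ : ℝ}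
    {V : ℝ≥0∞} (hV : ∀ x, μ (ball x ρ) ≤ V) :
    ∫⁻ z in nearDiagonal ρ, ‖u z.1 - u z.2‖ₑ ∂μ.prod μ ≤ 2 * V * ∫⁻ x, ‖u x‖ₑ ∂μ := by
  calc ∫⁻ z in nearDiagonal ρ, ‖u z.1 - u z.2‖ₑ ∂μ.prod μ
      ≤ ∫⁻ z in nearDiagonal ρ, (‖u z.1‖ₑ + ‖u z.2‖ₑ) ∂μ.prod μ :=
        lintegral_mono fun z => enorm_sub_le
    _ = 2 * ∫⁻ z in nearDiagonal ρ, ‖u z.1‖ₑ ∂μ.prod μ := by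
        rw [lintegral_add_left' hu.enorm.comp_fst.restrict, two_mul]
        congr 1
        exact setLIntegral_nearDiagonal_swap (fun z => ‖u z.1‖ₑ) ρ
    _ ≤ 2 * V * ∫⁻ x, ‖u x‖ₑ ∂μ := by
        rw [mul_assoc]
        gcongr
        exact setLIntegral_nearDiagonal_fst_le hu.enorm hV

theorem setLIntegral_nearDiagonal_volume_Ico_le {u : X → ℝ} (hu : AEMeasurable u μ) {ρ : ℝ}
    {V : ℝ≥0∞} (hV : ∀ x, μ (ball x ρ) ≤ V) (hV_top : V ≠ ∞) :
    ∫⁻ z in nearDiagonal ρ, volume (Set.Ico (u z.2) (u z.1)) ∂μ.prod μ ≤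
      V * ∫⁻ s, μ (boundaryLayer u s ρ) := by
  have hIco : Measurable fun q : ℝ × ℝ × ℝ => (Set.Ico q.1 q.2.1).indicator (1 : ℝ → ℝ≥0∞) q.2.2 :=
    measurable_one.indicator ((measurableSet_le measurable_fst measurable_snd.snd).inter
      (measurableSet_lt measurable_snd.snd measurable_snd.fst))
  have hF : AEMeasurable (Function.uncurry fun (z : X × X) (s : ℝ) =>
      (Set.Ico (u z.2) (u z.1)).indicator (1 : ℝ → ℝ≥0∞) s)
      (((μ.prod μ).restrict (nearDiagonal ρ)).prod volume) :=
    hIco.comp_aemeasurable ((hu.comp_snd.restrict.comp_fst).prodMk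
      ((hu.comp_fst.restrict.comp_fst).prodMk measurable_snd.aemeasurable))
  calc ∫⁻ z in nearDiagonal ρ, volume (Set.Ico (u z.2) (u z.1)) ∂μ.prod μ
      = ∫⁻ s, ∫⁻ z in nearDiagonal ρ, (Set.Ico (u z.2) (u z.1)).indicator 1 s ∂μ.prod μ := by
        simp_rw [← lintegral_indicator_one measurableSet_Ico]
        exact lintegral_lintegral_swap hF
    _ ≤ ∫⁻ s, ∫⁻ z in nearDiagonal ρ,
          (toMeasurable μ (boundaryLayer u s ρ)).indicator 1 z.1 ∂μ.prod μ := by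
        refine lintegral_mono fun s => setLIntegral_mono' (measurableSet_nearDiagonal ρ) ?_
        intro z hz
        by_cases hs : s ∈ Set.Ico (u z.2) (u z.1)
        · rw [Set.indicator_of_mem hs, Set.indicator_of_mem (subset_toMeasurable μ _
            (mem_boundaryLayer_of_dist_lt hs.2 hs.1 hz))]
          rfl
        · simp [Set.indicator_of_notMem hs]
    _ ≤ ∫⁻ s, V * μ (boundaryLayer u s ρ) := by
        refine lintegral_mono fun s => ?_
        rw [← measure_toMeasurable (boundaryLayer u s ρ),
          ← lintegral_indicator_one (measurableSet_toMeasurable _ _)]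
        exact setLIntegral_nearDiagonal_fst_le
          (measurable_one.indicator (measurableSet_toMeasurable _ _)).aemeasurable hV
    _ = V * ∫⁻ s, μ (boundaryLayer u s ρ) := lintegral_const_mul' V _ hV_top

theorem setLIntegral_nearDiagonal_enorm_sub_le_lintegral_boundaryLayer {u : X → ℝ}
    (hu : AEMeasurable u μ) {ρ : ℝ} {V : ℝ≥0∞} (hV : ∀ x, μ (ball x ρ) ≤ V) (hV_top : V ≠ ∞) :
    ∫⁻ z in nearDiagonal ρ, ‖u z.1 - u z.2‖ₑ ∂μ.prod μ ≤
      2 * V * ∫⁻ s, μ (boundaryLayer u s ρ) := by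
  calc ∫⁻ z in nearDiagonal ρ, ‖u z.1 - u z.2‖ₑ ∂μ.prod μ
      = 2 * ∫⁻ z in nearDiagonal ρ, volume (Set.Ico (u z.2) (u z.1)) ∂μ.prod μ := by
        simp_rw [enorm_sub_eq_volume_Ico_add_volume_Ico]
        rw [lintegral_add_left' ?_, two_mul]
        · congr 1
          exact setLIntegral_nearDiagonal_swap (fun z => volume (Set.Ico (u z.2) (u z.1))) ρ
        · simp_rw [Real.volume_Ico]
          exact (hu.comp_fst.sub hu.comp_snd).ennreal_ofReal.restrict
    _ ≤ 2 * V * ∫⁻ s, μ (boundaryLayer u s ρ) := by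
        rw [mul_assoc]
        gcongr
        exact setLIntegral_nearDiagonal_volume_Ico_le hu hV hV_top

theorem setLIntegral_nearDiagonal_enorm_sub_le_of_measure_ball_le {c₂ dH : ℝ} (hc₂ : 0 ≤ c₂)
    (hball : ∀ x r, 0 < r → μ (ball x r) ≤ ENNReal.ofReal (c₂ * r ^ dH)) {u : X → ℝ}
    (hu : AEMeasurable u μ) {a R ρ : ℝ} (ha : 0 ≤ a) (hR : 0 < R) (hρ : 0 < ρ) :
    ∫⁻ z in nearDiagonal ρ, ‖u z.1 - u z.2‖ₑ ∂μ.prod μ ≤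
      ENNReal.ofReal (2 * c₂ * ρ ^ (dH + a)) *
        (ENNReal.ofReal (R ^ (-a)) * ∫⁻ x, ‖u x‖ₑ ∂μ + ∫⁻ s, boundaryLayerProfile μ u a R s) := by
  have hV : ∀ x, μ (ball x ρ) ≤ ENNReal.ofReal (c₂ * ρ ^ dH) := fun x => hball x ρ hρ
  have hsplit : ENNReal.ofReal (2 * c₂ * ρ ^ (dH + a)) =
      2 * ENNReal.ofReal (c₂ * ρ ^ dH) * ENNReal.ofReal (ρ ^ a) := by
    rw [← ENNReal.ofReal_ofNat 2, ← ENNReal.ofReal_mul zero_le_two,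
      ← ENNReal.ofReal_mul (by positivity), Real.rpow_add hρ]
    ring_nf
  rcases le_or_gt ρ R with hρR | hRρ
  · calc ∫⁻ z in nearDiagonal ρ, ‖u z.1 - u z.2‖ₑ ∂μ.prod μ
        ≤ 2 * ENNReal.ofReal (c₂ * ρ ^ dH) * ∫⁻ s, μ (boundaryLayer u s ρ) :=
          setLIntegral_nearDiagonal_enorm_sub_le_lintegral_boundaryLayer hu hV
            ENNReal.ofReal_ne_top
      _ ≤ 2 * ENNReal.ofReal (c₂ * ρ ^ dH) *
            ∫⁻ s, ENNReal.ofReal (ρ ^ a) * boundaryLayerProfile μ u a R s := by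
          gcongr with s
          exact measure_boundaryLayer_le_mul_boundaryLayerProfile μ u hρ hρR s
      _ ≤ _ := by
          rw [lintegral_const_mul' _ _ ENNReal.ofReal_ne_top, ← mul_assoc, hsplit]
          gcongr
          exact le_add_self
  · have hone : 1 ≤ ENNReal.ofReal (ρ ^ a) * ENNReal.ofReal (R ^ (-a)) := by
      rw [← ENNReal.ofReal_mul (by positivity), Real.rpow_neg hR.le, ← div_eq_mul_inv,
        ← Real.div_rpow hρ.le hR.le, ← ENNReal.ofReal_one]
      exact ENNReal.ofReal_le_ofReal (Real.one_le_rpow ((one_le_div hR).2 hRρ.le) ha)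
    calc ∫⁻ z in nearDiagonal ρ, ‖u z.1 - u z.2‖ₑ ∂μ.prod μ
        ≤ 2 * ENNReal.ofReal (c₂ * ρ ^ dH) * ∫⁻ x, ‖u x‖ₑ ∂μ :=
          setLIntegral_nearDiagonal_enorm_sub_le hu hV
      _ ≤ 2 * ENNReal.ofReal (c₂ * ρ ^ dH) *
            (ENNReal.ofReal (ρ ^ a) * ENNReal.ofReal (R ^ (-a)) * ∫⁻ x, ‖u x‖ₑ ∂μ) := by
          gcongr
          exact le_mul_of_one_le_left' hone
      _ = ENNReal.ofReal (2 * c₂ * ρ ^ (dH + a)) *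
            (ENNReal.ofReal (R ^ (-a)) * ∫⁻ x, ‖u x‖ₑ ∂μ) := by
          rw [hsplit]
          ring
      _ ≤ _ := by
          gcongr
          exact le_self_add

end NearDiagonal

theorem ofReal_exp_neg_le_tsum_indicator {dW c d r : ℝ} (hdW : 1 < dW) (hc : 0 ≤ c)
    (hd : 0 ≤ d) (hr : 0 < r) :
    ENNReal.ofReal (Real.exp (-c * (d ^ dW / r ^ dW) ^ (1 / (dW - 1)))) ≤
      ∑' k : ℕ, ENNReal.ofReal (Real.exp (-c * k)) *
        (Set.Iio (((k : ℝ) + 1) * r)).indicator 1 d := by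
  set x := d / r
  set k := ⌊x⌋₊
  have hx : 0 ≤ x := div_nonneg hd hr.le
  have hpow : (d ^ dW / r ^ dW) ^ (1 / (dW - 1)) = x ^ (dW / (dW - 1)) := by
    rw [← Real.div_rpow hd hr.le, ← Real.rpow_mul hx, mul_one_div]
  have hk : (k : ℝ) ≤ x ^ (dW / (dW - 1)) := by
    rcases lt_or_ge x 1 with hx1 | hx1
    · simp [k, Nat.floor_eq_zero.2 hx1, Real.rpow_nonneg hx]
    · calc (k : ℝ) ≤ x := Nat.floor_le hx
        _ = x ^ (1 : ℝ) := (Real.rpow_one x).symm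
        _ ≤ x ^ (dW / (dW - 1)) := Real.rpow_le_rpow_of_exponent_le hx1
            ((one_le_div (by linarith)).2 (by linarith))
  have hdk : d ∈ Set.Iio (((k : ℝ) + 1) * r) := by
    rw [Set.mem_Iio, ← div_lt_iff₀ hr]
    exact Nat.lt_floor_add_one x
  calc ENNReal.ofReal (Real.exp (-c * (d ^ dW / r ^ dW) ^ (1 / (dW - 1))))
      ≤ ENNReal.ofReal (Real.exp (-c * k)) * (Set.Iio (((k : ℝ) + 1) * r)).indicator 1 d := by
        rw [Set.indicator_of_mem hdk, Pi.one_apply, mul_one, hpow]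
        exact ENNReal.ofReal_le_ofReal (Real.exp_le_exp.2 (by nlinarith))
    _ ≤ _ := ENNReal.le_tsum k

theorem lintegral_mul_le_tsum_setLIntegral {α : Type*} [MeasurableSpace α] {ν : Measure α}
    {G W : α → ℝ≥0∞} {c : ℝ≥0∞} {e : ℕ → ℝ≥0∞} {S : ℕ → Set α} (hG : AEMeasurable G ν)
    (hS : ∀ k, MeasurableSet (S k)) (hW : ∀ᵐ z ∂ν, W z ≤ c * ∑' k, e k * (S k).indicator 1 z) :
    ∫⁻ z, G z * W z ∂ν ≤ c * ∑' k, e k * ∫⁻ z in S k, G z ∂ν := by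
  have hGS : ∀ k, AEMeasurable ((S k).indicator G) ν := fun k => hG.indicator (hS k)
  calc ∫⁻ z, G z * W z ∂ν ≤ ∫⁻ z, c * ∑' k, e k * (S k).indicator G z ∂ν := by
        refine lintegral_mono_ae (hW.mono fun z hz => ?_)
        calc G z * W z ≤ G z * (c * ∑' k, e k * (S k).indicator 1 z) := by gcongr
          _ = c * ∑' k, e k * (S k).indicator G z := by
            rw [mul_left_comm, ← ENNReal.tsum_mul_left]
            congr 2 with k
            by_cases hz : z ∈ S k <;> simp [hz, mul_comm]
    _ = c * ∑' k, e k * ∫⁻ z in S k, G z ∂ν := by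
        rw [lintegral_const_mul'' c (AEMeasurable.tsum fun k => (hGS k).const_mul _),
          lintegral_tsum fun k => (hGS k).const_mul _]
        simp_rw [lintegral_const_mul'' _ (hGS _), lintegral_indicator (hS _)]

theorem summable_add_one_rpow_mul_exp_neg_mul (β : ℝ) {c : ℝ} (hc : 0 < c) :
    Summable fun k : ℕ => ((k : ℝ) + 1) ^ β * Real.exp (-c * k) := by
  have hnat : Summable fun k : ℕ => ((k : ℝ) + 1) ^ ⌈β⌉₊ * Real.exp (-c * k) := by
    refine (((summable_nat_add_iff 1).2 (Real.summable_pow_mul_exp_neg_nat_mul ⌈β⌉₊ hc)).mul_left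
      (Real.exp c)).congr fun k => ?_
    push_cast
    rw [mul_left_comm, ← Real.exp_add]
    ring_nf
  refine hnat.of_nonneg_of_le (fun k => by positivity) fun k => ?_
  gcongr
  calc ((k : ℝ) + 1) ^ β ≤ ((k : ℝ) + 1) ^ (⌈β⌉₊ : ℝ) :=
        Real.rpow_le_rpow_of_exponent_le (by linarith [k.cast_nonneg (α := ℝ)]) (Nat.le_ceil β)
    _ = ((k : ℝ) + 1) ^ ⌈β⌉₊ := Real.rpow_natCast _ _

section BesovEnergy

variable {X : Type*} [MeasurableSpace X] {μ : Measure X} [SFinite μ] {K : ℝ → X → X → ℝ}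

theorem besovEnergy_one_eq_lintegral_prod {t : ℝ}
    (hK : Measurable fun z : X × X => K t z.1 z.2) {u : X → ℝ} (hu : AEMeasurable u μ) :
    besovEnergy μ K 1 t u = ∫⁻ z, ‖u z.1 - u z.2‖ₑ * ENNReal.ofReal (K t z.1 z.2) ∂μ.prod μ := by
  simp only [besovEnergy, Real.rpow_one, ← Real.enorm_eq_ofReal_abs]
  exact (lintegral_prod _ ((hu.comp_fst.sub hu.comp_snd).enorm.mul
    hK.ennreal_ofReal.aemeasurable)).symm

variable [PseudoMetricSpace X] [OpensMeasurableSpace X] [SecondCountableTopology X]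

theorem besovEnergy_one_le_tsum {c₃ c₄ dH dW t : ℝ} (hK : IsHeatKernel μ K)
    (hUB : SubGaussianUpperBound μ K c₃ c₄ dH dW) (hdW : 1 < dW) (hc₄ : 0 ≤ c₄) (ht : 0 < t)
    {u : X → ℝ} (hu : AEMeasurable u μ) :
    besovEnergy μ K 1 t u ≤ ENNReal.ofReal (c₃ * t ^ (-(dH / dW))) *
      ∑' k : ℕ, ENNReal.ofReal (Real.exp (-c₄ * k)) *
        ∫⁻ z in nearDiagonal (((k : ℝ) + 1) * t ^ (1 / dW)), ‖u z.1 - u z.2‖ₑ ∂μ.prod μ := by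
  have hr : (t ^ (1 / dW)) ^ dW = t := by
    rw [← Real.rpow_mul ht.le, one_div_mul_cancel (by linarith), Real.rpow_one]
  rw [besovEnergy_one_eq_lintegral_prod (hK.measurable t) hu]
  refine lintegral_mul_le_tsum_setLIntegral (hu.comp_fst.sub hu.comp_snd).enorm
    (fun k => measurableSet_nearDiagonal _) ?_
  filter_upwards [hUB t ht] with z hz
  calc ENNReal.ofReal (K t z.1 z.2)
      ≤ ENNReal.ofReal (c₃ * t ^ (-(dH / dW))) *
          ENNReal.ofReal (Real.exp (-c₄ * (dist z.1 z.2 ^ dW / t) ^ (1 / (dW - 1)))) := by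
        rw [← ENNReal.ofReal_mul' (Real.exp_nonneg _)]
        exact ENNReal.ofReal_le_ofReal hz
    _ ≤ _ := by
        gcongr
        have h := ofReal_exp_neg_le_tsum_indicator hdW hc₄ (dist_nonneg (x := z.1) (y := z.2))
          (Real.rpow_pos_of_pos ht (1 / dW))
        rwa [hr] at h

theorem rpow_neg_mul_besovEnergy_le {c₂ c₃ c₄ dH dW α R t : ℝ} (hK : IsHeatKernel μ K)
    (hUB : SubGaussianUpperBound μ K c₃ c₄ dH dW)
    (hball : ∀ x r, 0 < r → μ (ball x r) ≤ ENNReal.ofReal (c₂ * r ^ dH))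
    (hc₂ : 0 ≤ c₂) (hc₃ : 0 ≤ c₃) (hc₄ : 0 < c₄) (hdW : 1 < dW) (hα : 0 ≤ α) (hR : 0 < R)
    (ht : 0 < t) {u : X → ℝ} (hu : AEMeasurable u μ) :
    ENNReal.ofReal (t ^ (-α)) * besovEnergy μ K 1 t u ≤
      ENNReal.ofReal (2 * c₂ * c₃ *
        ∑' k : ℕ, ((k : ℝ) + 1) ^ (dH + α * dW) * Real.exp (-c₄ * k)) *
      (ENNReal.ofReal (R ^ (-(α * dW))) * ∫⁻ x, ‖u x‖ₑ ∂μ +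
        ∫⁻ s, boundaryLayerProfile μ u (α * dW) R s) := by
  set r := t ^ (1 / dW)
  set β := dH + α * dW
  set B := ENNReal.ofReal (R ^ (-(α * dW))) * ∫⁻ x, ‖u x‖ₑ ∂μ +
    ∫⁻ s, boundaryLayerProfile μ u (α * dW) R s
  have hr : 0 < r := Real.rpow_pos_of_pos ht _
  have hscale : t ^ (-α) * t ^ (-(dH / dW)) * r ^ β = 1 := by
    rw [← Real.rpow_mul ht.le, ← Real.rpow_add ht, ← Real.rpow_add ht]
    convert Real.rpow_zero t using 2
    field_simp
    ring
  have hterm : ∀ k : ℕ, ENNReal.ofReal (t ^ (-α)) * (ENNReal.ofReal (c₃ * t ^ (-(dH / dW))) *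
      (ENNReal.ofReal (Real.exp (-c₄ * k)) *
        (ENNReal.ofReal (2 * c₂ * (((k : ℝ) + 1) * r) ^ β) * B))) =
      ENNReal.ofReal (2 * c₂ * c₃ * (((k : ℝ) + 1) ^ β * Real.exp (-c₄ * k))) * B := by
    intro k
    simp only [← mul_assoc]
    rw [← ENNReal.ofReal_mul (by positivity), ← ENNReal.ofReal_mul (by positivity),
      ← ENNReal.ofReal_mul (by positivity), Real.mul_rpow (by positivity) hr.le]
    congr 2
    linear_combination (2 * c₂ * c₃ * ((k : ℝ) + 1) ^ β * Real.exp (-c₄ * k)) * hscale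
  calc ENNReal.ofReal (t ^ (-α)) * besovEnergy μ K 1 t u
      ≤ ENNReal.ofReal (t ^ (-α)) * (ENNReal.ofReal (c₃ * t ^ (-(dH / dW))) *
          ∑' k : ℕ, ENNReal.ofReal (Real.exp (-c₄ * k)) *
            ∫⁻ z in nearDiagonal (((k : ℝ) + 1) * r), ‖u z.1 - u z.2‖ₑ ∂μ.prod μ) := by
        gcongr
        exact besovEnergy_one_le_tsum hK hUB hdW hc₄.le ht hu
    _ ≤ ENNReal.ofReal (t ^ (-α)) * (ENNReal.ofReal (c₃ * t ^ (-(dH / dW))) *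
          ∑' k : ℕ, ENNReal.ofReal (Real.exp (-c₄ * k)) *
            (ENNReal.ofReal (2 * c₂ * (((k : ℝ) + 1) * r) ^ β) * B)) := by
        gcongr with k
        exact setLIntegral_nearDiagonal_enorm_sub_le_of_measure_ball_le hc₂ hball hu
          (by positivity) hR (by positivity)
    _ = ∑' k : ℕ, ENNReal.ofReal (2 * c₂ * c₃ * (((k : ℝ) + 1) ^ β * Real.exp (-c₄ * k))) * B := by
        rw [← ENNReal.tsum_mul_left, ← ENNReal.tsum_mul_left]
        exact tsum_congr hterm
    _ = _ := by
        rw [ENNReal.tsum_mul_right, ← ENNReal.ofReal_tsum_of_nonneg (fun k => by positivity)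
          ((summable_add_one_rpow_mul_exp_neg_mul β hc₄).mul_left _), tsum_mul_left]

end BesovEnergy

theorem coarea_estimate_general (dH dW c₁ c₂ c₃ c₄ α : ℝ)
    (hdW : 1 < dW) (hc₁ : 0 < c₁) (hc₂ : 0 < c₂)
    (hc₃ : 0 < c₃) (hc₄ : 0 < c₄) (hα0 : 0 < α) :
    ∃ C₁ C₂ : ℝ, 0 < C₁ ∧ 0 < C₂ ∧
      ∀ (X : Type) [MetricSpace X] [MeasurableSpace X] [BorelSpace X]
        (μ : Measure X) [SigmaFinite μ] (K : ℝ → X → X → ℝ),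
        IsHeatKernel μ K → AhlforsRegular μ c₁ c₂ dH →
        SubGaussianUpperBound μ K c₃ c₄ dH dW →
        ∀ u : X → ℝ, MemLp u 1 μ → ∀ R : ℝ, 0 < R →
        (∫⁻ s : ℝ, ⨆ (r : ℝ) (_ : 0 < r) (_ : r ≤ R),
            ENNReal.ofReal (r ^ (-(α * dW))) *
              μ {x | s < u x ∧ Metric.infDist x {y | s < u y}ᶜ < r}) ≠ ∞ →
        MemBesov μ K 1 α u ∧
          besovSeminorm μ K 1 α u ≤
            ENNReal.ofReal (C₁ * R ^ (-(α * dW))) * eLpNorm u 1 μ +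
              ENNReal.ofReal C₂ *
                (∫⁻ s : ℝ, ⨆ (r : ℝ) (_ : 0 < r) (_ : r ≤ R),
                  ENNReal.ofReal (r ^ (-(α * dW))) *
                    μ {x | s < u x ∧ Metric.infDist x {y | s < u y}ᶜ < r}) := by
  set C := 2 * c₂ * c₃ * ∑' k : ℕ, ((k : ℝ) + 1) ^ (dH + α * dW) * Real.exp (-c₄ * k)
  have hC : 0 < C := by
    have : 0 < ∑' k : ℕ, ((k : ℝ) + 1) ^ (dH + α * dW) * Real.exp (-c₄ * k) :=
      (summable_add_one_rpow_mul_exp_neg_mul _ hc₄).tsum_pos (fun k => by positivity) 0 (by simp)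
    positivity
  refine ⟨C, C, hC, hC, fun X _ _ _ μ _ K hK hAhlfors hUB u hu R hR hprofile => ?_⟩
  have : SecondCountableTopology X := secondCountableTopology_of_measure_ball_pos μ
    fun x r hr => (ENNReal.ofReal_pos.2 (by positivity)).trans_le (hAhlfors x r hr).1
  have hsem : besovSeminorm μ K 1 α u ≤
      ENNReal.ofReal (C * R ^ (-(α * dW))) * eLpNorm u 1 μ +
        ENNReal.ofReal C * ∫⁻ s, boundaryLayerProfile μ u (α * dW) R s := by
    refine iSup₂_le fun t ht => ?_
    rw [one_div_one, ENNReal.rpow_one, ENNReal.ofReal_mul hC.le, mul_assoc, ← mul_add,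
      eLpNorm_one_eq_lintegral_enorm]
    exact rpow_neg_mul_besovEnergy_le hK hUB (fun x r hr => (hAhlfors x r hr).2) hc₂.le hc₃.le
      hc₄ hdW hα0.le hR ht hu.aemeasurable
  refine ⟨⟨by rwa [ENNReal.ofReal_one], (hsem.trans_lt ?_).ne⟩, hsem⟩
  exact ENNReal.add_lt_top.2 ⟨ENNReal.mul_lt_top ENNReal.ofReal_lt_top hu.eLpNorm_lt_top,
    ENNReal.mul_lt_top ENNReal.ofReal_lt_top hprofile.lt_top⟩

/-- **Co-area type estimate.** Under Ahlfors regularity and the upper sub-Gaussian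
estimate, if `h(u,s) = sup_{r∈(0,R]} r^{−αd_W} μ({x ∈ E_s(u) : d(x, X∖E_s(u)) < r})`
is integrable in `s`, then `u ∈ B^{1,α}(X)` with
`‖u‖_{1,α} ≤ C₁ R^{−αd_W} ‖u‖_{L¹} + C₂ ∫_ℝ h(u,s) ds`,
the constants depending only on `α` and the structural constants. -/
theorem coarea_estimate (dH dW c₁ c₂ c₃ c₄ α : ℝ)
    (hdH : 0 < dH) (hdW : 1 < dW) (hc₁ : 0 < c₁) (hc₂ : 0 < c₂)
    (hc₃ : 0 < c₃) (hc₄ : 0 < c₄) (hα0 : 0 < α) (hα1 : α ≤ dH / dW) :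
    ∃ C₁ C₂ : ℝ, 0 < C₁ ∧ 0 < C₂ ∧
      ∀ (X : Type) [MetricSpace X] [MeasurableSpace X] [BorelSpace X]
        (μ : Measure X) [SigmaFinite μ] (K : ℝ → X → X → ℝ),
        IsHeatKernel μ K → AhlforsRegular μ c₁ c₂ dH →
        SubGaussianUpperBound μ K c₃ c₄ dH dW →
        ∀ u : X → ℝ, MemLp u 1 μ → ∀ R : ℝ, 0 < R →
        (∫⁻ s : ℝ, ⨆ (r : ℝ) (_ : 0 < r) (_ : r ≤ R),
            ENNReal.ofReal (r ^ (-(α * dW))) *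
              μ {x | s < u x ∧ Metric.infDist x {y | s < u y}ᶜ < r}) ≠ ∞ →
        MemBesov μ K 1 α u ∧
          besovSeminorm μ K 1 α u ≤
            ENNReal.ofReal (C₁ * R ^ (-(α * dW))) * eLpNorm u 1 μ +
              ENNReal.ofReal C₂ *
                (∫⁻ s : ℝ, ⨆ (r : ℝ) (_ : 0 < r) (_ : r ≤ R),
                  ENNReal.ofReal (r ^ (-(α * dW))) *
                    μ {x | s < u x ∧ Metric.infDist x {y | s < u y}ᶜ < r}) :=
  coarea_estimate_general dH dW c₁ c₂ c₃ c₄ α hdW hc₁ hc₂ hc₃ hc₄ hα0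

end BesovDirichlet
end
end

section
/- Assume μ is Ahlfors d_H-regular and the heat kernel satisfies the lower sub-Gaussian estimate. Let 0 < α ≤ d_H/d_W and let E ⊆ X be a porous set: there is c_E > 0 such that for every 0 < r < diam(E) and every y ∈ E with d(y, X ∖ E) < r there exists z ∈ ∂E with B(z, c_E r) ⊆ B(y, r) ∩ (X ∖ E). Then there exists a constant C_E > 0, depending only on c_E and the structural constants, such that ‖1_E‖_{1,α} ≥ C_E · limsup_{r→0⁺} r^{−α d_W} μ({ x ∈ E : d(x, X ∖ E) < r }). -/
/-!
At scale `r` take the time `t = r ^ d_W`. A point `x ∈ E` with `d(x, Eᶜ) < r` sees, by porosity,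
a ball of radius `c_E r` inside `B(x, r) ∖ E`. On that ball the lower sub-Gaussian estimate gives
`p_t(x, y) ≥ c₅ e^{-c₆} r^{-d_H}`, and Ahlfors regularity gives it measure `≥ c₁ (c_E r)^{d_H}`,
so the inner integral of the energy at `x` is at least `c₁ c₅ c_E^{d_H} e^{-c₆}`. Integrating over
`{x ∈ E | d(x, Eᶜ) < r}` and multiplying by `t^{-α} = r^{-α d_W}` bounds `‖1_E‖_{1,α}` from below at
every scale `r < diam E`; if `diam E = 0`, then `E` has at most one point and is null.
-/

open MeasureTheory ENNReal Metric Filter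

noncomputable section

namespace BesovDirichlet

variable {X : Type*} [MeasurableSpace X]

open scoped Topology

theorem le_besovSeminorm (K : ℝ → X → X → ℝ) (μ : Measure X) (p α : ℝ) (f : X → ℝ) {t : ℝ}
    (ht : 0 < t) :
    ENNReal.ofReal (t ^ (-α)) * besovEnergy μ K p t f ^ (1 / p) ≤ besovSeminorm μ K p α f :=
  le_iSup₂ (f := fun s (_ : 0 < s) => ENNReal.ofReal (s ^ (-α)) * besovEnergy μ K p s f ^ (1 / p))
    t ht

theorem eventually_ofReal_lt_nhdsGT {a : ℝ≥0∞} (ha : 0 < a) :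
    ∀ᶠ r in 𝓝[>] (0 : ℝ), ENNReal.ofReal r < a := by
  have hlim := ENNReal.tendsto_ofReal (tendsto_id (x := 𝓝 (0 : ℝ)))
  rw [ENNReal.ofReal_zero] at hlim
  exact (hlim.eventually (gt_mem_nhds ha)).filter_mono nhdsWithin_le_nhds

section

variable [PseudoMetricSpace X] {μ : Measure X}

theorem AhlforsRegular.measure_singleton {c₁ c₂ dH : ℝ} (hA : AhlforsRegular μ c₁ c₂ dH)
    (hdH : 0 < dH) (x : X) : μ {x} = 0 := by
  have hlim : Tendsto (fun r : ℝ => ENNReal.ofReal (c₂ * r ^ dH)) (𝓝[>] 0) (𝓝 0) := by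
    have hcont := ENNReal.tendsto_ofReal
      (((Real.continuous_rpow_const hdH.le).tendsto 0).const_mul c₂)
    rw [Real.zero_rpow hdH.ne', mul_zero, ENNReal.ofReal_zero] at hcont
    exact hcont.mono_left nhdsWithin_le_nhds
  refine le_antisymm (ge_of_tendsto hlim ?_) zero_le
  filter_upwards [self_mem_nhdsWithin] with r hr
  exact (measure_mono (Set.singleton_subset_iff.2 (mem_ball_self hr))).trans (hA x r hr).2

theorem AhlforsRegular.measure_eq_zero_of_subsingleton {c₁ c₂ dH : ℝ}
    (hA : AhlforsRegular μ c₁ c₂ dH) (hdH : 0 < dH) {E : Set X} (hE : E.Subsingleton) :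
    μ E = 0 := by
  rcases hE.eq_empty_or_singleton with rfl | ⟨x, rfl⟩
  · exact measure_empty
  · exact hA.measure_singleton hdH x

theorem SubGaussianLowerBound.ae_ae_le_of_dist_lt {K : ℝ → X → X → ℝ} {c₅ c₆ dH dW : ℝ}
    (hL : SubGaussianLowerBound μ K c₅ c₆ dH dW) [SFinite μ] (hdW : 1 ≤ dW) (hc₅ : 0 ≤ c₅)
    (hc₆ : 0 ≤ c₆) {r : ℝ} (hr : 0 < r) :
    ∀ᵐ x ∂μ, ∀ᵐ y ∂μ, dist x y < r → c₅ * r ^ (-dH) * Real.exp (-c₆) ≤ K (r ^ dW) x y := by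
  have hdW₀ : 0 < dW := zero_lt_one.trans_le hdW
  filter_upwards [Measure.ae_ae_of_ae_prod (hL (r ^ dW) (by positivity))] with x hx
  filter_upwards [hx] with y hy hxy
  have htime : (r ^ dW) ^ (-(dH / dW)) = r ^ (-dH) := by
    rw [← Real.rpow_mul hr.le]
    congr 1
    field_simp
  have hscaled : (dist x y ^ dW / r ^ dW) ^ (1 / (dW - 1)) ≤ 1 := by
    refine Real.rpow_le_one (by positivity) ?_ (one_div_nonneg.2 (by linarith))
    rw [div_le_one (by positivity)]
    exact Real.rpow_le_rpow dist_nonneg hxy.le hdW₀.le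
  have hexp : Real.exp (-c₆) ≤ Real.exp (-c₆ * (dist x y ^ dW / r ^ dW) ^ (1 / (dW - 1))) :=
    Real.exp_le_exp.2 (by nlinarith)
  refine le_trans ?_ hy
  rw [htime]
  gcongr

theorem lintegral_indicator_sub_mul_ge (p : ℝ) {E B : Set X} {x : X} {r κ : ℝ} {k : X → ℝ}
    (hx : x ∈ E) (hB : MeasurableSet B) (hBE : B ⊆ ball x r ∩ Eᶜ)
    (hk : ∀ᵐ y ∂μ, dist x y < r → κ ≤ k y) :
    ENNReal.ofReal κ * μ B ≤ ∫⁻ y, ENNReal.ofReal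
      (|E.indicator (fun _ => (1 : ℝ)) x - E.indicator (fun _ => (1 : ℝ)) y| ^ p) *
        ENNReal.ofReal (k y) ∂μ := by
  rw [← setLIntegral_const]
  refine (setLIntegral_mono_ae' hB ?_).trans (setLIntegral_le_lintegral B _)
  filter_upwards [hk] with y hy hyB
  obtain ⟨hyx, hyE⟩ := hBE hyB
  rw [Set.indicator_of_mem hx, Set.indicator_of_notMem hyE, sub_zero, abs_one, Real.one_rpow,
    ENNReal.ofReal_one, one_mul]
  exact ENNReal.ofReal_le_ofReal (hy (mem_ball'.1 hyx))

variable [OpensMeasurableSpace X]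

theorem besovEnergy_indicator_ge_of_porous {K : ℝ → X → X → ℝ} {c₁ c₂ c₅ c₆ dH dW cE r : ℝ}
    (p : ℝ) [SFinite μ] (hA : AhlforsRegular μ c₁ c₂ dH)
    (hL : SubGaussianLowerBound μ K c₅ c₆ dH dW) (hdW : 1 ≤ dW) (hc₅ : 0 ≤ c₅)
    (hc₆ : 0 ≤ c₆) (hcE : 0 < cE) (hr : 0 < r)
    {E : Set X} (hE : MeasurableSet E)
    (hporous : ∀ y ∈ E, infDist y Eᶜ < r → ∃ z, ball z (cE * r) ⊆ ball y r ∩ Eᶜ) :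
    ENNReal.ofReal (c₁ * c₅ * cE ^ dH * Real.exp (-c₆)) * μ {x | x ∈ E ∧ infDist x Eᶜ < r} ≤
      besovEnergy μ K p (r ^ dW) (E.indicator fun _ => 1) := by
  have hS : MeasurableSet {x | x ∈ E ∧ infDist x Eᶜ < r} :=
    hE.inter (measurableSet_lt (continuous_infDist_pt _).measurable measurable_const)
  have hconst : c₁ * c₅ * cE ^ dH * Real.exp (-c₆) =
      c₅ * r ^ (-dH) * Real.exp (-c₆) * (c₁ * (cE * r) ^ dH) := by
    rw [Real.mul_rpow hcE.le hr.le, Real.rpow_neg hr.le]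
    field_simp
  refine (setLIntegral_const _ _).symm.trans_le
    ((setLIntegral_mono_ae' hS ?_).trans (setLIntegral_le_lintegral _ _))
  filter_upwards [hL.ae_ae_le_of_dist_lt hdW hc₅ hc₆ hr] with x hx ⟨hxE, hxr⟩
  obtain ⟨z, hz⟩ := hporous x hxE hxr
  calc ENNReal.ofReal (c₁ * c₅ * cE ^ dH * Real.exp (-c₆))
      = ENNReal.ofReal (c₅ * r ^ (-dH) * Real.exp (-c₆)) *
          ENNReal.ofReal (c₁ * (cE * r) ^ dH) := by
        rw [hconst, ENNReal.ofReal_mul (by positivity)]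
    _ ≤ ENNReal.ofReal (c₅ * r ^ (-dH) * Real.exp (-c₆)) * μ (ball z (cE * r)) := by
        gcongr
        exact (hA z _ (by positivity)).1
    _ ≤ _ := lintegral_indicator_sub_mul_ge p hxE measurableSet_ball hz hx

end

theorem porous_lower_bound_general (dH dW c₁ c₂ c₅ c₆ α cE : ℝ)
    (hdH : 0 < dH) (hdW : 1 < dW) (hc₁ : 0 < c₁)
    (hc₅ : 0 < c₅) (hc₆ : 0 < c₆) (hcE : 0 < cE) :
    ∃ C : ℝ, 0 < C ∧
      ∀ (X : Type) [MetricSpace X] [MeasurableSpace X] [BorelSpace X]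
        (μ : Measure X) [SigmaFinite μ] (K : ℝ → X → X → ℝ),
        IsHeatKernel μ K → AhlforsRegular μ c₁ c₂ dH →
        SubGaussianLowerBound μ K c₅ c₆ dH dW →
        ∀ E : Set X, MeasurableSet E →
        (∀ r : ℝ, 0 < r → ENNReal.ofReal r < EMetric.diam E →
          ∀ y ∈ E, Metric.infDist y Eᶜ < r →
            ∃ z ∈ frontier E, Metric.ball z (cE * r) ⊆ Metric.ball y r ∩ Eᶜ) →
        ENNReal.ofReal C *
            Filter.limsup (fun r : ℝ =>
                ENNReal.ofReal (r ^ (-(α * dW))) * μ {x | x ∈ E ∧ Metric.infDist x Eᶜ < r})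
              (nhdsWithin 0 (Set.Ioi 0)) ≤
          besovSeminorm μ K 1 α (E.indicator fun _ => (1 : ℝ)) := by
  refine ⟨c₁ * c₅ * cE ^ dH * Real.exp (-c₆), by positivity, ?_⟩
  intro X _ _ _ μ _ K _ hA hL E hE hporous
  rw [← ENNReal.limsup_const_mul_of_ne_top ENNReal.ofReal_ne_top]
  refine limsup_le_of_le (by isBoundedDefault) ?_
  rcases eq_or_ne (ediam E) 0 with hdiam | hdiam
  · have hE0 : μ E = 0 :=
      hA.measure_eq_zero_of_subsingleton hdH (Metric.ediam_eq_zero_iff.1 hdiam)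
    refine Eventually.of_forall fun r => ?_
    rw [measure_mono_null (fun x hx => hx.1) hE0, mul_zero, mul_zero]
    exact zero_le
  filter_upwards [self_mem_nhdsWithin, eventually_ofReal_lt_nhdsGT (pos_iff_ne_zero.2 hdiam)]
    with r (hr : 0 < r) hrd
  have hscale : r ^ (-(α * dW)) = (r ^ dW) ^ (-α) := by
    rw [← Real.rpow_mul hr.le, mul_neg, mul_comm]
  calc _ = ENNReal.ofReal ((r ^ dW) ^ (-α)) *
          (ENNReal.ofReal (c₁ * c₅ * cE ^ dH * Real.exp (-c₆)) *
            μ {x | x ∈ E ∧ infDist x Eᶜ < r}) := by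
        rw [hscale, mul_left_comm]
    _ ≤ ENNReal.ofReal ((r ^ dW) ^ (-α)) *
          besovEnergy μ K 1 (r ^ dW) (E.indicator fun _ => 1) := by
        gcongr
        exact besovEnergy_indicator_ge_of_porous 1 hA hL hdW.le hc₅.le hc₆.le hcE hr hE
          fun y hy hyr => (hporous r hr hrd y hy hyr).imp fun _ hz => hz.2
    _ ≤ _ := by simpa using le_besovSeminorm K μ 1 α _ (Real.rpow_pos_of_pos hr dW)

/-- **Lower Besov bound for porous sets.** Under Ahlfors regularity and the lower
sub-Gaussian estimate, for `0 < α ≤ d_H/d_W` and every porous set `E` with porosity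
constant `c_E`,
`‖1_E‖_{1,α} ≥ C_E limsup_{r→0⁺} r^{−αd_W} μ({x ∈ E : d(x, X∖E) < r})`,
where `C_E` depends only on `c_E` and the structural constants. -/
theorem porous_lower_bound (dH dW c₁ c₂ c₅ c₆ α cE : ℝ)
    (hdH : 0 < dH) (hdW : 1 < dW) (hc₁ : 0 < c₁) (hc₂ : 0 < c₂)
    (hc₅ : 0 < c₅) (hc₆ : 0 < c₆) (hα0 : 0 < α) (hα1 : α ≤ dH / dW) (hcE : 0 < cE) :
    ∃ C : ℝ, 0 < C ∧
      ∀ (X : Type) [MetricSpace X] [MeasurableSpace X] [BorelSpace X]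
        (μ : Measure X) [SigmaFinite μ] (K : ℝ → X → X → ℝ),
        IsHeatKernel μ K → AhlforsRegular μ c₁ c₂ dH →
        SubGaussianLowerBound μ K c₅ c₆ dH dW →
        ∀ E : Set X, MeasurableSet E →
        (∀ r : ℝ, 0 < r → ENNReal.ofReal r < EMetric.diam E →
          ∀ y ∈ E, Metric.infDist y Eᶜ < r →
            ∃ z ∈ frontier E, Metric.ball z (cE * r) ⊆ Metric.ball y r ∩ Eᶜ) →
        ENNReal.ofReal C *
            Filter.limsup (fun r : ℝ =>
                ENNReal.ofReal (r ^ (-(α * dW))) * μ {x | x ∈ E ∧ Metric.infDist x Eᶜ < r})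
              (nhdsWithin 0 (Set.Ioi 0)) ≤
          besovSeminorm μ K 1 α (E.indicator fun _ => (1 : ℝ)) :=
  porous_lower_bound_general dH dW c₁ c₂ c₅ c₆ α cE hdH hdW hc₁ hc₅ hc₆ hcE

end BesovDirichlet
end
end

section
/- Assume the heat kernel satisfies the lower sub-Gaussian estimate. Let E ⊆ X be measurable and suppose there exist δ > 0, ε > 0 and c₈ > 0 such that (μ×μ)({ (x,y) ∈ (X∖E) × E : d(x,y) < ε }) ≥ c₈ ε^{d_H+δ}. Then, with t = ε^{d_W}, one has t^{−δ/d_W} · ‖P_t 1_E − 1_E‖_{L¹(X,μ)} ≥ 2 c₅ c₈ e^{−c₆} > 0. -/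
open MeasureTheory ENNReal Metric Filter

noncomputable section

namespace BesovDirichlet

variable {X : Type*} [MeasurableSpace X]

/-! Since `p_t(x, ·)` is a probability density and the sign of `1_E(y) − 1_E(x)` does not depend
on `y`, `|P_t 1_E(x) − 1_E(x)| = ∫ p_t(x,y) |1_E(x) − 1_E(y)| dμ(y)`; hence `‖P_t 1_E − 1_E‖₁` is the
`p = 1` Besov energy of `1_E`, which by symmetry of the kernel is `2 ∫_{Eᶜ×E} p_t`. For
`t = ε^{d_W}` the lower sub-Gaussian estimate gives `p_t ≥ c₅ ε^{−d_H} e^{−c₆}` on pairs at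
distance `< ε`, and the assumed mass `c₈ ε^{d_H+δ}` of such pairs in `Eᶜ × E` yields the bound. -/

theorem mul_measure_le_setLIntegral {α : Type*} [MeasurableSpace α] {ν : Measure α}
    {f : α → ℝ≥0∞} {S A : Set α} (hf : AEMeasurable f (ν.restrict A)) (hSA : S ⊆ A)
    {c : ℝ≥0∞} (hc : ∀ᵐ a ∂ν, a ∈ S → c ≤ f a) :
    c * ν S ≤ ∫⁻ a in A, f a ∂ν :=
  calc c * ν S ≤ c * ν ({a | c ≤ f a} ∩ A) := by
        gcongr c * ?_
        exact measure_mono_ae <| by filter_upwards [hc] with a ha hS using ⟨ha hS, hSA hS⟩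
    _ ≤ c * ν.restrict A {a | c ≤ f a} := by
        gcongr c * ?_
        exact Measure.le_restrict_apply _ _
    _ ≤ ∫⁻ a in A, f a ∂ν := mul_meas_ge_le_lintegral₀ hf c

variable {μ : Measure X} {K : ℝ → X → X → ℝ}

theorem integral_mul_indicator_one {k : X → ℝ} {E : Set X} (hE : MeasurableSet E) :
    ∫ y, k y * E.indicator (fun _ => (1 : ℝ)) y ∂μ = ∫ y in E, k y ∂μ := by
  simp_rw [← Set.indicator_mul_right, mul_one]
  exact integral_indicator hE

theorem ofReal_abs_integral_mul_indicator_sub_indicator {k : X → ℝ}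
    (hk : ∀ y, 0 ≤ k y) (hk_int : Integrable k μ) (hk_one : ∫ y, k y ∂μ = 1) {E : Set X}
    (hE : MeasurableSet E) (x : X) :
    ENNReal.ofReal |(∫ y, k y * E.indicator (fun _ => (1 : ℝ)) y ∂μ) -
        E.indicator (fun _ => (1 : ℝ)) x| =
      ∫⁻ y, ENNReal.ofReal |E.indicator (fun _ => (1 : ℝ)) x - E.indicator (fun _ => (1 : ℝ)) y| *
        ENNReal.ofReal (k y) ∂μ := by
  have hk_ae : 0 ≤ᵐ[μ] k := Filter.Eventually.of_forall hk
  rw [integral_mul_indicator_one hE]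
  by_cases hx : x ∈ E
  · have hrhs : ∀ y, ENNReal.ofReal |1 - E.indicator (fun _ => (1 : ℝ)) y| *
        ENNReal.ofReal (k y) = Eᶜ.indicator (fun y => ENNReal.ofReal (k y)) y := by
      intro y; by_cases hy : y ∈ E <;> simp [hy]
    have hmass := integral_add_compl hE hk_int
    rw [Set.indicator_of_mem hx, show (∫ y in E, k y ∂μ) - 1 = -∫ y in Eᶜ, k y ∂μ by linarith,
      abs_neg, abs_of_nonneg (setIntegral_nonneg hE.compl fun y _ => hk y),
      ofReal_integral_eq_lintegral_ofReal hk_int.restrict (ae_restrict_of_ae hk_ae)]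
    simp_rw [hrhs]
    exact (lintegral_indicator hE.compl _).symm
  · have hrhs : ∀ y, ENNReal.ofReal |0 - E.indicator (fun _ => (1 : ℝ)) y| *
        ENNReal.ofReal (k y) = E.indicator (fun y => ENNReal.ofReal (k y)) y := by
      intro y; by_cases hy : y ∈ E <;> simp [hy]
    rw [Set.indicator_of_notMem hx, sub_zero, abs_of_nonneg (setIntegral_nonneg hE fun y _ => hk y),
      ofReal_integral_eq_lintegral_ofReal hk_int.restrict (ae_restrict_of_ae hk_ae)]
    simp_rw [hrhs]
    exact (lintegral_indicator hE _).symm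

theorem IsHeatKernel.ae_integrable (hK : IsHeatKernel μ K) {t : ℝ} (ht : 0 < t) :
    ∀ᵐ x ∂μ, Integrable (K t x) μ := by
  filter_upwards [hK.conservative t ht] with x hx
  by_contra h
  rw [integral_undef h] at hx
  exact zero_ne_one hx

theorem IsHeatKernel.lintegral_abs_heatOp_indicator_sub_indicator (hK : IsHeatKernel μ K)
    {t : ℝ} (ht : 0 < t) {E : Set X} (hE : MeasurableSet E) :
    ∫⁻ x, ENNReal.ofReal |heatOp μ K t (E.indicator fun _ => (1 : ℝ)) x -
        E.indicator (fun _ => (1 : ℝ)) x| ∂μ =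
      besovEnergy μ K 1 t (E.indicator fun _ => (1 : ℝ)) := by
  refine lintegral_congr_ae ?_
  filter_upwards [hK.ae_integrable ht, hK.conservative t ht] with x hint hone
  simp only [Real.rpow_one]
  exact ofReal_abs_integral_mul_indicator_sub_indicator (hK.nonneg t x) hint hone hE x

theorem IsHeatKernel.besovEnergy_one_indicator [SFinite μ] (hK : IsHeatKernel μ K) (t : ℝ)
    {E : Set X} (hE : MeasurableSet E) :
    besovEnergy μ K 1 t (E.indicator fun _ => (1 : ℝ)) =
      2 * ∫⁻ xy in Eᶜ ×ˢ E, ENNReal.ofReal (K t xy.1 xy.2) ∂μ.prod μ := by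
  set g : X × X → ℝ≥0∞ := fun xy => ENNReal.ofReal (K t xy.1 xy.2)
  have hg : Measurable g := ENNReal.measurable_ofReal.comp (hK.measurable t)
  have hpair : ∀ x y, ENNReal.ofReal (|E.indicator (fun _ => (1 : ℝ)) x -
      E.indicator (fun _ => (1 : ℝ)) y| ^ (1 : ℝ)) * ENNReal.ofReal (K t x y) =
        (E ×ˢ Eᶜ ∪ Eᶜ ×ˢ E).indicator g (x, y) := by
    intro x y
    by_cases hx : x ∈ E <;> by_cases hy : y ∈ E <;> simp [g, hx, hy]
  have hswap : ∫⁻ xy in E ×ˢ Eᶜ, g xy ∂μ.prod μ = ∫⁻ xy in Eᶜ ×ˢ E, g xy ∂μ.prod μ := by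
    rw [← Measure.measurePreserving_swap.setLIntegral_comp_preimage (hE.compl.prod hE) hg,
      Set.preimage_swap_prod]
    simp only [g, Prod.fst_swap, Prod.snd_swap, hK.symm t]
  have hcut : MeasurableSet (E ×ˢ Eᶜ ∪ Eᶜ ×ˢ E) := (hE.prod hE.compl).union (hE.compl.prod hE)
  calc besovEnergy μ K 1 t (E.indicator fun _ => (1 : ℝ))
      = ∫⁻ xy, (E ×ˢ Eᶜ ∪ Eᶜ ×ˢ E).indicator g xy ∂μ.prod μ := by
        rw [besovEnergy, lintegral_prod _ (hg.indicator hcut).aemeasurable]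
        simp only [hpair]
    _ = ∫⁻ xy in E ×ˢ Eᶜ, g xy ∂μ.prod μ + ∫⁻ xy in Eᶜ ×ˢ E, g xy ∂μ.prod μ := by
        rw [lintegral_indicator hcut,
          lintegral_union (hE.compl.prod hE) (Set.disjoint_prod.2 (Or.inl disjoint_compl_right))]
    _ = 2 * ∫⁻ xy in Eᶜ ×ˢ E, g xy ∂μ.prod μ := by rw [hswap, two_mul]

theorem SubGaussianLowerBound.ae_le_of_dist_lt [PseudoMetricSpace X] {c₅ c₆ dH dW ε : ℝ}
    (hL : SubGaussianLowerBound μ K c₅ c₆ dH dW) (hdW : 1 < dW) (hc₅ : 0 ≤ c₅) (hc₆ : 0 ≤ c₆) (hε : 0 < ε) :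
    ∀ᵐ xy ∂μ.prod μ, dist xy.1 xy.2 < ε →
      c₅ * ε ^ (-dH) * Real.exp (-c₆) ≤ K (ε ^ dW) xy.1 xy.2 := by
  filter_upwards [hL _ (Real.rpow_pos_of_pos hε dW)] with xy hxy hd
  refine le_trans ?_ hxy
  have hscale : (dist xy.1 xy.2 ^ dW / ε ^ dW) ^ (1 / (dW - 1)) ≤ 1 :=
    Real.rpow_le_one (by positivity)
      ((div_le_one (by positivity)).2 (Real.rpow_le_rpow dist_nonneg hd.le (by linarith)))
      (one_div_nonneg.2 (by linarith))
  rw [← Real.rpow_mul hε.le, mul_neg, mul_div_cancel₀ _ (by linarith : dW ≠ 0), neg_mul]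
  gcongr
  exact mul_le_of_le_one_right hc₆ hscale

theorem neighborhood_lower_bound_general
    {X : Type*} [MetricSpace X] [MeasurableSpace X]
    (μ : Measure X) [SigmaFinite μ] (K : ℝ → X → X → ℝ) (hK : IsHeatKernel μ K)
    (dH dW c₅ c₆ : ℝ) (hdW : 1 < dW) (hc₅ : 0 < c₅) (hc₆ : 0 < c₆)
    (hL : SubGaussianLowerBound μ K c₅ c₆ dH dW)
    (E : Set X) (hE : MeasurableSet E)
    (δ ε c₈ : ℝ) (hε : 0 < ε)
    (hlow : ENNReal.ofReal (c₈ * ε ^ (dH + δ)) ≤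
      (μ.prod μ) {xy : X × X | xy.1 ∉ E ∧ xy.2 ∈ E ∧ dist xy.1 xy.2 < ε}) :
    ENNReal.ofReal (2 * c₅ * c₈ * Real.exp (-c₆)) ≤
      ENNReal.ofReal ((ε ^ dW) ^ (-(δ / dW))) *
        (∫⁻ x, ENNReal.ofReal
          |heatOp μ K (ε ^ dW) (E.indicator fun _ => (1 : ℝ)) x -
            E.indicator (fun _ => (1 : ℝ)) x| ∂μ) := by
  set κ := c₅ * ε ^ (-dH) * Real.exp (-c₆)
  have hconst : 2 * c₅ * c₈ * Real.exp (-c₆) =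
      (ε ^ dW) ^ (-(δ / dW)) * (2 * (κ * (c₈ * ε ^ (dH + δ)))) := by
    rw [← Real.rpow_mul hε.le, mul_neg, mul_div_cancel₀ _ (by linarith : dW ≠ 0)]
    have hpow : ε ^ (-δ) * ε ^ (-dH) * ε ^ (dH + δ) = 1 := by
      rw [← Real.rpow_add hε, ← Real.rpow_add hε, show -δ + -dH + (dH + δ) = 0 by ring,
        Real.rpow_zero]
    linear_combination (-2 * c₅ * c₈ * Real.exp (-c₆)) * hpow
  have hpairs : ENNReal.ofReal κ * ENNReal.ofReal (c₈ * ε ^ (dH + δ)) ≤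
      ∫⁻ xy in Eᶜ ×ˢ E, ENNReal.ofReal (K (ε ^ dW) xy.1 xy.2) ∂μ.prod μ :=
    (mul_le_mul_right hlow _).trans <| mul_measure_le_setLIntegral
      (ENNReal.measurable_ofReal.comp (hK.measurable _)).aemeasurable
      (fun _ hxy => by exact ⟨hxy.1, hxy.2.1⟩)
      (by filter_upwards [hL.ae_le_of_dist_lt hdW hc₅.le hc₆.le hε] with xy hxy hS
          using ENNReal.ofReal_le_ofReal (hxy hS.2.2))
  rw [hK.lintegral_abs_heatOp_indicator_sub_indicator (Real.rpow_pos_of_pos hε dW) hE,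
    hK.besovEnergy_one_indicator _ hE, hconst, ENNReal.ofReal_mul (by positivity),
    ENNReal.ofReal_mul zero_le_two, ENNReal.ofReal_ofNat, ENNReal.ofReal_mul (by positivity)]
  gcongr

/-- **Lower bound on `‖P_t 1_E − 1_E‖₁`.** Under the lower sub-Gaussian estimate, if the
measure of `ε`-close pairs in `Eᶜ × E` is at least `c₈ ε^{d_H+δ}`, then, for `t = ε^{d_W}`,
`t^{−δ/d_W} ‖P_t 1_E − 1_E‖_{L¹(X,μ)} ≥ 2 c₅ c₈ e^{−c₆} > 0`. -/
theorem neighborhood_lower_bound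
    {X : Type*} [MetricSpace X] [MeasurableSpace X] [BorelSpace X]
    (μ : Measure X) [SigmaFinite μ] (K : ℝ → X → X → ℝ) (hK : IsHeatKernel μ K)
    (dH dW c₅ c₆ : ℝ) (hdH : 0 < dH) (hdW : 1 < dW) (hc₅ : 0 < c₅) (hc₆ : 0 < c₆)
    (hL : SubGaussianLowerBound μ K c₅ c₆ dH dW)
    (E : Set X) (hE : MeasurableSet E)
    (δ ε c₈ : ℝ) (hδ : 0 < δ) (hε : 0 < ε) (hc₈ : 0 < c₈)
    (hlow : ENNReal.ofReal (c₈ * ε ^ (dH + δ)) ≤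
      (μ.prod μ) {xy : X × X | xy.1 ∉ E ∧ xy.2 ∈ E ∧ dist xy.1 xy.2 < ε}) :
    ENNReal.ofReal (2 * c₅ * c₈ * Real.exp (-c₆)) ≤
      ENNReal.ofReal ((ε ^ dW) ^ (-(δ / dW))) *
        (∫⁻ x, ENNReal.ofReal
          |heatOp μ K (ε ^ dW) (E.indicator fun _ => (1 : ℝ)) x -
            E.indicator (fun _ => (1 : ℝ)) x| ∂μ) :=
  neighborhood_lower_bound_general μ K hK dH dW c₅ c₆ hdW hc₅ hc₆ hL E hE δ ε c₈ hε hlow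

end BesovDirichlet
end
end
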